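/- arXiv:2306.14861 — 5 statements merged into one kernel-verified Lean document; each statement's English description precedes it below -/
import Mathlib

section
/- Let h, h' : X → ℝ^d be functions and let w_t, w_t' ∈ ℝ^d be weight vectors for tasks t = 1,...,N. Suppose for all tasks t and all inputs x, ⟨h'(x), w_t'⟩ = ⟨h(x), w_t⟩. Assume the image of h spans ℝ^d and there exist d tasks t_1,...,t_d such that {w_{t_i}} are linearly independent. Then there exists an invertible matrix A ∈ ℝ^{d×d} such that h'(x) = A h(x) for all x. -/
open Matrix

/-!
Stack the heads of `d` tasks whose true weights `w` are linearly independent into matrices `W`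
and `W'`; equality of predictions reads `W' h' x = W h x`, with `W` invertible. If `v W' = 0`
then the functional `v W` vanishes on the range of `h`, which spans, so `v W = 0` and `v = 0`.
Hence `W'` is invertible too, and `h' = W'⁻¹ W h`.
-/

namespace Matrix

variable {m : Type*} [Fintype m]

theorem dotProduct_eq_of_span_range_eq_top {R X : Type*} [CommSemiring R] {h : X → m → R}
    (hspan : Submodule.span R (Set.range h) = ⊤) {u v : m → R}
    (huv : ∀ x, u ⬝ᵥ h x = v ⬝ᵥ h x) : u = v :=
  dotProduct_eq u v fun y =>
    LinearMap.congr_fun (LinearMap.ext_on_range hspan (f := dotProductBilin R R u)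
      (g := dotProductBilin R R v) huv) y

variable [DecidableEq m] {K X : Type*} [Field K] {h h' : X → m → K} {A B : Matrix m m K}

theorem isUnit_of_mulVec_eq_mulVec_of_span_range_eq_top
    (hspan : Submodule.span K (Set.range h) = ⊤) (hB : IsUnit B)
    (hAB : ∀ x, A *ᵥ h' x = B *ᵥ h x) : IsUnit A := by
  refine vecMul_injective_iff_isUnit.mp fun u v huv => vecMul_injective_of_isUnit hB ?_
  refine dotProduct_eq_of_span_range_eq_top hspan fun x => ?_
  rw [← dotProduct_mulVec, ← dotProduct_mulVec, ← hAB, dotProduct_mulVec, dotProduct_mulVec]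
  exact congrArg (· ⬝ᵥ h' x) huv

theorem exists_isUnit_mulVec_eq_of_mulVec_eq_mulVec
    (hspan : Submodule.span K (Set.range h) = ⊤) (hB : IsUnit B)
    (hAB : ∀ x, A *ᵥ h' x = B *ᵥ h x) : ∃ M : Matrix m m K, IsUnit M ∧ ∀ x, h' x = M *ᵥ h x := by
  have hA := isUnit_of_mulVec_eq_mulVec_of_span_range_eq_top hspan hB hAB
  refine ⟨A⁻¹ * B, (isUnit_nonsing_inv_iff.mpr hA).mul hB, fun x => ?_⟩
  rw [← mulVec_mulVec, ← hAB, mulVec_mulVec, nonsing_inv_mul A ((isUnit_iff_isUnit_det A).mp hA),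
    one_mulVec]

end Matrix

/-- Multi-task linear identifiability: if two feature extractors with task-specific
linear heads give identical predictions on all tasks and inputs, the image of `h`
spans `ℝ^d`, and some `d` tasks have linearly independent ground-truth weights,
then `h'` is an invertible linear transformation of `h`. -/
theorem multitask_linear_identifiability
    {X : Type*} {d N : ℕ}
    (h h' : X → (Fin d → ℝ)) (w w' : Fin N → (Fin d → ℝ))
    (hpred : ∀ (t : Fin N) (x : X), w' t ⬝ᵥ h' x = w t ⬝ᵥ h x)
    (hspan : Submodule.span ℝ (Set.range h) = ⊤)
    (hindep : ∃ ts : Fin d → Fin N, LinearIndependent ℝ (fun i => w (ts i))) :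
    ∃ A : Matrix (Fin d) (Fin d) ℝ, IsUnit A ∧ ∀ x, h' x = A.mulVec (h x) := by
  obtain ⟨ts, hli⟩ := hindep
  have hW : IsUnit (of fun i => w (ts i)) := linearIndependent_rows_iff_isUnit.mp hli
  exact exists_isUnit_mulVec_eq_of_mulVec_eq_mulVec (A := of fun i => w' (ts i)) hspan hW
    fun x => funext fun i => hpred (ts i) x
end

section
/- Let h, h' : X → ℝ^d with image of h spanning ℝ^d. Suppose ⟨h'(x), w_t'⟩ = ⟨h(x), w_t⟩ for all x and all t in a set of d tasks, where W = [w_{t_1},...,w_{t_d}] is invertible. Then the matrix W' = [w'_{t_1},...,w'_{t_d}] is also invertible. -/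
open Matrix

/-- From equality of predictions on `d` tasks, the spanning condition on `h`,
and invertibility of the ground-truth weight matrix `W` (with columns `w i`),
the alternative weight matrix `W'` (with columns `w' i`) is also invertible. -/
theorem alternative_weight_matrix_invertible
    {X : Type*} {d : ℕ}
    (h h' : X → (Fin d → ℝ)) (w w' : Fin d → (Fin d → ℝ))
    (hspan : Submodule.span ℝ (Set.range h) = ⊤)
    (hpred : ∀ (t : Fin d) (x : X), w' t ⬝ᵥ h' x = w t ⬝ᵥ h x)
    (hW : IsUnit (Matrix.of fun i j => w j i)) :
    IsUnit (Matrix.of fun i j => w' j i) := by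
  set M : Matrix (Fin d) (Fin d) ℝ := Matrix.of fun i j => w j i with hM
  set M' : Matrix (Fin d) (Fin d) ℝ := Matrix.of fun i j => w' j i with hM'
  rw [← Matrix.isUnit_transpose]
  rw [← Matrix.mulVec_surjective_iff_isUnit]
  have hMT : Function.Surjective (Mᵀ.mulVec) :=
    Matrix.mulVec_surjective_iff_isUnit.2 ((Matrix.isUnit_transpose M).2 hW)
  -- key: M'ᵀ *ᵥ h' x = Mᵀ *ᵥ h x
  have key : ∀ x, M'ᵀ *ᵥ h' x = Mᵀ *ᵥ h x := by
    intro x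
    funext t
    simpa [Matrix.mulVec, hM, hM', Matrix.transpose] using hpred t x
  suffices hs : Function.Surjective M'ᵀ.mulVecLin by
    intro v; obtain ⟨u, hu⟩ := hs v; rw [Matrix.mulVecLin_apply] at hu; exact ⟨u, hu⟩
  rw [← LinearMap.range_eq_top, eq_top_iff]
  have : (⊤ : Submodule ℝ (Fin d → ℝ)) =
      Submodule.map (Mᵀ.mulVecLin) ⊤ := by
    rw [Submodule.map_top, LinearMap.range_eq_top.2 hMT]
  rw [this, ← hspan, Submodule.map_span, Submodule.span_le]
  rintro v ⟨u, ⟨x, rfl⟩, rfl⟩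
  exact ⟨h' x, by rw [Matrix.mulVecLin_apply]; exact key x⟩
end

section
/- Let A, A* ∈ ℝ^{d×d} be invertible and define the Gaussian density p_{A,Λ,a}(h) = N(h | A a, A Λ Aᵀ) (with Λ diagonal positive definite). If for two parameter sets the change-of-variables densities satisfy, for all h, T(A⁻¹h)ᵀ η − log Z − log det A = T(A*⁻¹h)ᵀ η* − log Z* − log det A*, where T(z) = (z, z∘z) ∈ ℝ^{2d} is the sufficient statistic of a factorized Gaussian, and there exist 2d+1 conditioning points u_0,...,u_{2d} such that L = [η(u_1)−η(u_0), ..., η(u_{2d})−η(u_0)] is invertible, then there exist a matrix M ∈ ℝ^{2d×2d} and vector r ∈ ℝ^{2d} with T(A⁻¹h) = M T(A*⁻¹h) + r for all h. -/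
open Matrix

/-- Sufficient statistics `T(z) = (z, z∘z)` of a factorized Gaussian, indexed by
`Fin d ⊕ Fin d` (representing `ℝ^{2d}`). -/
def Tstat {d : ℕ} (z : Fin d → ℝ) : Fin d ⊕ Fin d → ℝ :=
  Sum.elim z (fun i => z i ^ 2)

/-- Equality of exponential-family log-densities at `2d+1` conditioning points
(one base point `u₀` and `2d` further points making the natural-parameter
difference matrix `L` invertible) yields an affine relation between the
sufficient statistics of the two models. -/
theorem affine_relation_of_logdensity_eq {d : ℕ} {U : Type*}
    (A Astar : Matrix (Fin d) (Fin d) ℝ) (hA : IsUnit A) (hAstar : IsUnit Astar)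
    (η ηstar : U → (Fin d ⊕ Fin d → ℝ)) (Z Zstar : U → ℝ)
    (heq : ∀ (h : Fin d → ℝ) (u : U),
      Tstat (A⁻¹.mulVec h) ⬝ᵥ η u - Real.log (Z u) - Real.log A.det
        = Tstat (Astar⁻¹.mulVec h) ⬝ᵥ ηstar u - Real.log (Zstar u) - Real.log Astar.det)
    (u0 : U) (us : Fin d ⊕ Fin d → U)
    (hL : IsUnit (Matrix.of fun (i j : Fin d ⊕ Fin d) => η (us j) i - η u0 i)) :
    ∃ (M : Matrix (Fin d ⊕ Fin d) (Fin d ⊕ Fin d) ℝ) (r : Fin d ⊕ Fin d → ℝ),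
      ∀ h : Fin d → ℝ,
        Tstat (A⁻¹.mulVec h) = M.mulVec (Tstat (Astar⁻¹.mulVec h)) + r := by
  set L : Matrix (Fin d ⊕ Fin d) (Fin d ⊕ Fin d) ℝ :=
    Matrix.of fun (i j : Fin d ⊕ Fin d) => η (us j) i - η u0 i with hLdef
  set Ls : Matrix (Fin d ⊕ Fin d) (Fin d ⊕ Fin d) ℝ :=
    Matrix.of fun (i j : Fin d ⊕ Fin d) => ηstar (us j) i - ηstar u0 i with hLsdef
  set c : Fin d ⊕ Fin d → ℝ := fun j =>
    (Real.log (Z (us j)) - Real.log (Z u0))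
      - (Real.log (Zstar (us j)) - Real.log (Zstar u0)) with hcdef
  have hLT : IsUnit Lᵀ := by
    rw [Matrix.isUnit_iff_isUnit_det, Matrix.det_transpose,
      ← Matrix.isUnit_iff_isUnit_det]
    exact hL
  have key : ∀ h : Fin d → ℝ,
      Lᵀ.mulVec (Tstat (A⁻¹.mulVec h))
        = Lsᵀ.mulVec (Tstat (Astar⁻¹.mulVec h)) + c := by
    intro h
    funext j
    have h1 := heq h (us j)
    have h2 := heq h u0
    have e1 : Lᵀ.mulVec (Tstat (A⁻¹.mulVec h)) j
        = Tstat (A⁻¹.mulVec h) ⬝ᵥ η (us j) - Tstat (A⁻¹.mulVec h) ⬝ᵥ η u0 := by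
      simp [Matrix.mulVec, dotProduct, hLdef, sub_mul, mul_comm,
        Finset.sum_sub_distrib]
    have e2 : Lsᵀ.mulVec (Tstat (Astar⁻¹.mulVec h)) j
        = Tstat (Astar⁻¹.mulVec h) ⬝ᵥ ηstar (us j)
          - Tstat (Astar⁻¹.mulVec h) ⬝ᵥ ηstar u0 := by
      simp [Matrix.mulVec, dotProduct, hLsdef, sub_mul, mul_comm,
        Finset.sum_sub_distrib]
    simp only [Pi.add_apply, e1, e2, hcdef]
    linarith
  refine ⟨(Lᵀ)⁻¹ * Lsᵀ, (Lᵀ)⁻¹.mulVec c, fun h => ?_⟩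
  have := congrArg (fun v => (Lᵀ)⁻¹.mulVec v) (key h)
  simpa [Matrix.mulVec_add, Matrix.mulVec_mulVec,
    Matrix.nonsing_inv_mul _ ((Matrix.isUnit_iff_isUnit_det _).1 hLT)] using this
end

section
/- Let T(z) = (z₁,...,z_d, z₁²,...,z_d²) : ℝ^d → ℝ^{2d}. Suppose M ∈ ℝ^{2d×2d} and r ∈ ℝ^{2d} satisfy T(z) = M T(l(z)) + r for all z ∈ ℝ^d, where l(z) = B z for an invertible B ∈ ℝ^{d×d}. Then M is invertible. -/
open Matrix

/-- If `T(z) = M T(B z) + r` for all `z` with `B` invertible, then `M` is invertible. -/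
theorem M_invertible_of_affine_relation {d : ℕ}
    (B : Matrix (Fin d) (Fin d) ℝ) (hB : IsUnit B)
    (M : Matrix (Fin d ⊕ Fin d) (Fin d ⊕ Fin d) ℝ) (r : Fin d ⊕ Fin d → ℝ)
    (hrel : ∀ z : Fin d → ℝ, Tstat z = M.mulVec (Tstat (B.mulVec z)) + r) :
    IsUnit M := by
  have hT0 : Tstat (0 : Fin d → ℝ) = 0 := by
    funext k; cases k <;> simp [Tstat]
  have hr : r = 0 := by
    have h0 := hrel 0
    rw [Matrix.mulVec_zero B, hT0, Matrix.mulVec_zero] at h0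
    simpa using h0.symm
  set P : Submodule ℝ (Fin d ⊕ Fin d → ℝ) := LinearMap.range M.mulVecLin with hP
  have hT : ∀ z : Fin d → ℝ, Tstat z ∈ P := by
    intro z
    refine ⟨Tstat (B.mulVec z), ?_⟩
    rw [Matrix.mulVecLin_apply]
    have := hrel z
    rw [hr, add_zero] at this
    exact this.symm
  have hsingle : ∀ k : Fin d ⊕ Fin d, Pi.single k (1 : ℝ) ∈ P := by
    have hinr : ∀ i : Fin d, Pi.single (Sum.inr i : Fin d ⊕ Fin d) (1 : ℝ) ∈ P := by
      intro i
      have hmem : (1/2 : ℝ) • (Tstat (Pi.single i 2) - (2 : ℝ) • Tstat (Pi.single i 1)) ∈ P :=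
        P.smul_mem _ (P.sub_mem (hT _) (P.smul_mem _ (hT _)))
      convert hmem using 1
      funext k
      cases k with
      | inl j =>
        by_cases h : j = i <;>
          simp [Tstat, Pi.single_apply, h]
      | inr j =>
        by_cases h : j = i <;>
          simp [Tstat, Pi.single_apply, h] <;> norm_num
    intro k
    cases k with
    | inr i => exact hinr i
    | inl i =>
      have hmem : Tstat (Pi.single i 1) - Pi.single (Sum.inr i : Fin d ⊕ Fin d) (1 : ℝ) ∈ P :=
        P.sub_mem (hT _) (hinr i)
      convert hmem using 1
      funext k
      cases k with
      | inl j =>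
        by_cases h : j = i <;>
          simp [Tstat, Pi.single_apply, h, Sum.inl.injEq]
      | inr j =>
        by_cases h : j = i <;>
          simp [Tstat, Pi.single_apply, h]
  have hsurj : Function.Surjective M.mulVec := by
    have htop : P = ⊤ := by
      rw [Submodule.eq_top_iff']
      intro v
      have : v = ∑ k : Fin d ⊕ Fin d, v k • (Pi.single k (1 : ℝ) : Fin d ⊕ Fin d → ℝ) := by
        funext j
        simp [Pi.single_apply, Finset.sum_apply]
      rw [this]
      exact P.sum_mem fun k _ => P.smul_mem _ (hsingle k)
    intro v
    have : v ∈ P := htop ▸ Submodule.mem_top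
    obtain ⟨w, hw⟩ := this
    exact ⟨w, by rw [← Matrix.mulVecLin_apply, hw]⟩
  exact Matrix.mulVec_surjective_iff_isUnit.mp hsurj
end

section
/- Let T(z) = (z, z∘z) : ℝ^d → ℝ^{2d} and suppose M ∈ ℝ^{2d×2d} is invertible and satisfies T(l⁻¹(z)) = M (T(z) + v) for all z, where l(z) = (l₁z₁, ..., l_dz_d) is an invertible diagonal scaling and v ∈ ℝ^{2d} a fixed vector. Then for each i ∈ {1,...,d}, the only possibly nonzero entries of M in row i and row d+i are M_{i,i}, M_{i,d+i}, M_{d+i,i}, M_{d+i,d+i}; moreover differentiating the relations with respect to z_i forces M_{i,d+i} = 0, M_{d+i,i} = 0, and M_{i,i} = l_i^{-1}. -/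
open Matrix

lemma mulVec_Tstat_single {d : ℕ} (M : Matrix (Fin d ⊕ Fin d) (Fin d ⊕ Fin d) ℝ)
    (r : Fin d ⊕ Fin d) (j : Fin d) (t : ℝ) :
    M.mulVec (Tstat (fun k => if k = j then t else 0)) r
      = M r (Sum.inl j) * t + M r (Sum.inr j) * t ^ 2 := by
  unfold Matrix.mulVec dotProduct Tstat
  rw [Fintype.sum_sum_type]
  simp [mul_ite, ite_pow, Finset.sum_ite_eq']

/-- Refinement to strict permutation-and-scaling identifiability: if `M` is
invertible and `T(l⁻¹(z)) = M (T(z) + v)` for all `z`, where `l` is the invertible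
diagonal scaling `z ↦ (l₁ z₁, …, l_d z_d)`, then in rows `i` and `d+i` the only
possibly nonzero entries of `M` are the four diagonal-block entries, and moreover
`M_{i,d+i} = 0`, `M_{d+i,i} = 0`, `M_{i,i} = l_i⁻¹`. -/
theorem M_is_diagonal_scaling {d : ℕ}
    (l : Fin d → ℝ) (hl : ∀ i, l i ≠ 0)
    (M : Matrix (Fin d ⊕ Fin d) (Fin d ⊕ Fin d) ℝ) (hM : IsUnit M)
    (v : Fin d ⊕ Fin d → ℝ)
    (hrel : ∀ z : Fin d → ℝ,
      Tstat (fun i => (l i)⁻¹ * z i) = M.mulVec (Tstat z + v)) :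
    ∀ i : Fin d,
      (∀ j : Fin d, j ≠ i →
        M (Sum.inl i) (Sum.inl j) = 0 ∧ M (Sum.inl i) (Sum.inr j) = 0 ∧
        M (Sum.inr i) (Sum.inl j) = 0 ∧ M (Sum.inr i) (Sum.inr j) = 0) ∧
      M (Sum.inl i) (Sum.inr i) = 0 ∧
      M (Sum.inr i) (Sum.inl i) = 0 ∧
      M (Sum.inl i) (Sum.inl i) = (l i)⁻¹ := by
  -- first, M.mulVec v = 0
  have h0 : Tstat (d := d) (fun _ => (0:ℝ)) = 0 := by
    funext s; cases s <;> simp [Tstat]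
  have h0' : Tstat (0 : Fin d → ℝ) = 0 := by
    funext s; cases s <;> simp [Tstat]
  have hv : M.mulVec v = 0 := by
    have h := hrel 0
    simp only [Pi.zero_apply, mul_zero] at h
    rw [h0, h0'] at h
    simpa using h.symm
  have hrel' : ∀ (z : Fin d → ℝ) (r : Fin d ⊕ Fin d),
      Tstat (fun i => (l i)⁻¹ * z i) r = M.mulVec (Tstat z) r := by
    intro z r
    have := congrFun (hrel z) r
    rw [Matrix.mulVec_add, hv] at this
    simpa using this
  -- key: evaluate on single-coordinate vectors
  have key : ∀ (r : Fin d ⊕ Fin d) (j : Fin d) (t : ℝ),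
      Tstat (fun i => (l i)⁻¹ * (if i = j then t else 0)) r
        = M r (Sum.inl j) * t + M r (Sum.inr j) * t ^ 2 := by
    intro r j t
    rw [hrel' (fun k => if k = j then t else 0) r, mulVec_Tstat_single]
  intro i
  have keyL : ∀ (j : Fin d) (t : ℝ),
      (l i)⁻¹ * (if i = j then t else 0)
        = M (Sum.inl i) (Sum.inl j) * t + M (Sum.inl i) (Sum.inr j) * t ^ 2 := by
    intro j t
    have := key (Sum.inl i) j t
    simpa [Tstat] using this
  have keyR : ∀ (j : Fin d) (t : ℝ),
      ((l i)⁻¹ * (if i = j then t else 0)) ^ 2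
        = M (Sum.inr i) (Sum.inl j) * t + M (Sum.inr i) (Sum.inr j) * t ^ 2 := by
    intro j t
    have := key (Sum.inr i) j t
    simpa [Tstat] using this
  refine ⟨?_, ?_, ?_, ?_⟩
  · intro j hj
    have hij : ¬ (i = j) := fun h => hj h.symm
    have h1 := keyL j 1; have h2 := keyL j (-1)
    have h3 := keyR j 1; have h4 := keyR j (-1)
    rw [if_neg hij] at h1 h2 h3 h4
    norm_num at h1 h2 h3 h4
    refine ⟨by linarith, by linarith, by linarith, by linarith⟩
  · have h1 := keyL i 1; have h2 := keyL i (-1)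
    rw [if_pos rfl] at h1 h2
    norm_num at h1 h2
    linarith
  · have h3 := keyR i 1; have h4 := keyR i (-1)
    rw [if_pos rfl] at h3 h4
    norm_num at h3 h4
    linarith
  · have h1 := keyL i 1; have h2 := keyL i (-1)
    rw [if_pos rfl] at h1 h2
    norm_num at h1 h2
    linarith
end
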